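/- Converse for sending log₂ M bits over the noiseless-feedback Poisson channel with zero dark current, reduced (genie-aided) form: let M ≥ 2 be an integer, and for each nonzero message m ∈ {1, …, M−1} let x_m : [0,∞) → [0,∞) be measurable and locally integrable and let T₁^{(m)} be a nonnegative random variable with P(T₁^{(m)} > t) = exp(−∫₀ᵗ x_m(s) ds) for all t ≥ 0. Fix T ≥ 0 and ε ∈ [0,1], and suppose that for every m ∈ {1, …, M−1} the conditional probability of error given message m, namely exp(−∫₀^T x_m(s) ds), is at most ε. Then each ℰ_m := E[∫₀^{min(T₁^{(m)},T)} x_m(s) ds] satisfies ℰ_m ≥ 1 − ε, and the average energy over the M equiprobable messages (with ℰ₀ = 0 for the zero message sent with the all-zero input) satisfies (1/M) Σ_{m=0}^{M−1} ℰ_m ≥ (M−1)(1−ε)/M. -/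

import Mathlib

/-!
With `F t = ∫₀ᵗ x`, the layer-cake formula gives
`E[F (min T₁ T)] = ∫₀^{F T} P(t ≤ F (min T₁ T)) dt`.
Since `F` is continuous and nondecreasing on `[0, T]`, every level `t ≤ F T` equals `F u` for some
`u ≤ T`, and then `P(t ≤ F (min T₁ T)) ≥ P(T₁ > u) = e^{-t}`. Hence each energy is at least
`1 - e^{-F T} ≥ 1 - ε`, and averaging over the `M - 1` nonzero messages gives the second bound.
-/

open MeasureTheory Real Set

lemma integral_Ioc_exp_neg {a : ℝ} (ha : 0 ≤ a) : ∫ t in Ioc 0 a, exp (-t) = 1 - exp (-a) := by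
  rw [← intervalIntegral.integral_of_le ha, intervalIntegral.integral_comp_neg, integral_exp]
  simp

section Primitive
variable {f : ℝ → ℝ} {T : ℝ}

lemma monotoneOn_primitive_of_nonneg (hf : ∀ t ∈ Icc 0 T, 0 ≤ f t)
    (hfi : IntegrableOn f (Icc 0 T)) : MonotoneOn (fun t ↦ ∫ s in (0:ℝ)..t, f s) (Icc 0 T) := by
  intro u hu v hv huv
  refine intervalIntegral.integral_mono_interval le_rfl hu.1 huv ?_ ?_
  · exact ae_restrict_of_forall_mem measurableSet_Ioc fun s hs ↦ hf s ⟨hs.1.le, hs.2.trans hv.2⟩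
  · exact (intervalIntegrable_iff_integrableOn_Icc_of_le hv.1).2
      (hfi.mono_set (Icc_subset_Icc le_rfl hv.2))

lemma continuousOn_primitive (hT : 0 ≤ T) (hfi : IntegrableOn f (Icc 0 T)) :
    ContinuousOn (fun t ↦ ∫ s in (0:ℝ)..t, f s) (Icc 0 T) := by
  rw [← uIcc_of_le hT] at hfi ⊢
  exact intervalIntegral.continuousOn_primitive_interval hfi

end Primitive

section

variable {Ω : Type*} [MeasurableSpace Ω] {μ : Measure Ω} [IsFiniteMeasure μ]

lemma setIntegral_Ioc_le_integral_of_le_measureReal {Y : Ω → ℝ} {a : ℝ} {h : ℝ → ℝ}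
    (hY : AEStronglyMeasurable Y μ) (hY0 : 0 ≤ᵐ[μ] Y) (hYa : Y ≤ᵐ[μ] fun _ ↦ a)
    (hh : IntegrableOn h (Ioc 0 a)) (hle : ∀ t ∈ Ioc 0 a, h t ≤ μ.real {ω | t ≤ Y ω}) :
    ∫ t in Ioc 0 a, h t ≤ ∫ ω, Y ω ∂μ := by
  have hYi : Integrable Y μ := by
    refine .of_bound hY a ?_
    filter_upwards [hY0, hYa] with ω h0 ha
    rwa [Real.norm_of_nonneg h0]
  have htail : IntegrableOn (fun t ↦ μ.real {ω | t ≤ Y ω}) (Ioc 0 a) := by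
    have hanti : Antitone fun t ↦ μ.real {ω | t ≤ Y ω} :=
      fun s t hst ↦ measureReal_mono fun ω hω ↦ hst.trans hω
    exact (hanti.antitoneOn _).integrableOn_isCompact isCompact_Icc |>.mono_set Ioc_subset_Icc_self
  rw [hYi.integral_eq_integral_Ioc_meas_le hY0 hYa]
  exact setIntegral_mono_on hh htail measurableSet_Ioc hle

lemma exp_neg_le_measureReal_le_comp_min {F : ℝ → ℝ} {g : Ω → ℝ} {T t : ℝ} (hT : 0 ≤ T)
    (hFc : ContinuousOn F (Icc 0 T)) (hFm : MonotoneOn F (Icc 0 T)) (hF0 : F 0 = 0)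
    (hsurv : ∀ u ∈ Icc 0 T, μ {ω | u < g ω} = ENNReal.ofReal (exp (-F u)))
    (ht : t ∈ Icc 0 (F T)) :
    exp (-t) ≤ μ.real {ω | t ≤ F (min (g ω) T)} := by
  obtain ⟨u, hu, rfl⟩ := intermediate_value_Icc hT hFc (hF0 ▸ ht)
  have hsub : {ω | u < g ω} ⊆ {ω | F u ≤ F (min (g ω) T)} := fun ω hω ↦
    hFm hu ⟨hu.1.trans (le_min hω.le hu.2), min_le_right _ _⟩ (le_min hω.le hu.2)
  calc exp (-F u) = μ.real {ω | u < g ω} := by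
        rw [measureReal_def, hsurv u hu, ENNReal.toReal_ofReal (exp_nonneg _)]
    _ ≤ μ.real {ω | F u ≤ F (min (g ω) T)} := measureReal_mono hsub

theorem one_sub_exp_neg_le_integral_intervalIntegral_min {f : ℝ → ℝ} {g : Ω → ℝ} {T : ℝ}
    (hT : 0 ≤ T) (hf : ∀ t ∈ Icc 0 T, 0 ≤ f t) (hfi : IntegrableOn f (Icc 0 T))
    (hg : Measurable g) (hg0 : ∀ ω, 0 ≤ g ω)
    (hsurv : ∀ u ∈ Icc 0 T, μ {ω | u < g ω} = ENNReal.ofReal (exp (-∫ s in (0:ℝ)..u, f s))) :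
    1 - exp (-∫ s in (0:ℝ)..T, f s) ≤ ∫ ω, (∫ s in (0:ℝ)..min (g ω) T, f s) ∂μ := by
  set F : ℝ → ℝ := fun t ↦ ∫ s in (0:ℝ)..t, f s
  have hFc : ContinuousOn F (Icc 0 T) := continuousOn_primitive hT hfi
  have hFm : MonotoneOn F (Icc 0 T) := monotoneOn_primitive_of_nonneg hf hfi
  have hmin : ∀ ω, min (g ω) T ∈ Icc 0 T := fun ω ↦ ⟨le_min (hg0 ω) hT, min_le_right _ _⟩
  have hF0 : F 0 = 0 := intervalIntegral.integral_same
  have hY0 : ∀ ω, 0 ≤ F (min (g ω) T) := fun ω ↦ hF0 ▸ hFm (left_mem_Icc.2 hT) (hmin ω) (hmin ω).1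
  have hFT : 0 ≤ F T := hF0 ▸ hFm (left_mem_Icc.2 hT) (right_mem_Icc.2 hT) hT
  have hYT : ∀ ω, F (min (g ω) T) ≤ F T := fun ω ↦ hFm (hmin ω) (right_mem_Icc.2 hT) (hmin ω).2
  have hYmeas : Measurable fun ω ↦ F (min (g ω) T) := by
    -- `F` is only continuous on `[0, T]`, hence the clamp; it is harmless since `g ≥ 0`.
    have hclamp : Continuous fun t ↦ F (max 0 (min t T)) :=
      hFc.comp_continuous (by fun_prop) fun t ↦ ⟨le_max_left _ _, max_le hT (min_le_right _ _)⟩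
    simpa only [Function.comp_def, max_eq_right (hmin _).1] using hclamp.measurable.comp hg
  have hexp : IntegrableOn (fun t ↦ exp (-t)) (Ioc 0 (F T)) :=
    (continuous_exp.comp continuous_neg).integrableOn_Ioc
  calc 1 - exp (-F T) = ∫ t in Ioc 0 (F T), exp (-t) := (integral_Ioc_exp_neg hFT).symm
    _ ≤ _ := setIntegral_Ioc_le_integral_of_le_measureReal hYmeas.aestronglyMeasurable
        (ae_of_all _ hY0) (ae_of_all _ hYT) hexp
        fun t ht ↦ exp_neg_le_measureReal_le_comp_min hT hFc hFm hF0 hsurv (Ioc_subset_Icc_self ht)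

end

theorem converse_M_messages_general
    (M : ℕ) (hM : 2 ≤ M)
    {Ω : Type*} [MeasurableSpace Ω] (μ : Measure Ω) [IsProbabilityMeasure μ]
    (x : ℕ → ℝ → ℝ) (T₁ : ℕ → Ω → ℝ)
    (hx_nonneg : ∀ m, 1 ≤ m → m < M → ∀ t : ℝ, 0 ≤ t → 0 ≤ x m t)
    (hx_loc : ∀ m, 1 ≤ m → m < M → ∀ T : ℝ, 0 ≤ T → IntegrableOn (x m) (Set.Icc 0 T))
    (hT₁_meas : ∀ m, 1 ≤ m → m < M → Measurable (T₁ m))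
    (hT₁_nonneg : ∀ m, 1 ≤ m → m < M → ∀ ω, 0 ≤ T₁ m ω)
    (hsurv : ∀ m, 1 ≤ m → m < M → ∀ t : ℝ, 0 ≤ t →
      μ {ω | t < T₁ m ω} = ENNReal.ofReal (Real.exp (-(∫ s in (0:ℝ)..t, x m s))))
    (T : ℝ) (hT : 0 ≤ T)
    (ε : ℝ)
    (herr : ∀ m, 1 ≤ m → m < M → Real.exp (-(∫ s in (0:ℝ)..T, x m s)) ≤ ε) :
    (∀ m, 1 ≤ m → m < M →
      1 - ε ≤ ∫ ω, (∫ s in (0:ℝ)..(min (T₁ m ω) T), x m s) ∂μ)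
    ∧ ((M : ℝ) - 1) * (1 - ε) / M ≤
        ((M : ℝ))⁻¹ * (0 + ∑ m ∈ Finset.Ioo 0 M,
          ∫ ω, (∫ s in (0:ℝ)..(min (T₁ m ω) T), x m s) ∂μ) := by
  have energy_ge : ∀ m, 1 ≤ m → m < M →
      1 - ε ≤ ∫ ω, (∫ s in (0:ℝ)..(min (T₁ m ω) T), x m s) ∂μ := fun m h1 h2 ↦
    (sub_le_sub_left (herr m h1 h2) 1).trans <|
      one_sub_exp_neg_le_integral_intervalIntegral_min hT (fun t ht ↦ hx_nonneg m h1 h2 t ht.1)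
        (hx_loc m h1 h2 T hT) (hT₁_meas m h1 h2) (hT₁_nonneg m h1 h2)
        fun u hu ↦ hsurv m h1 h2 u hu.1
  refine ⟨energy_ge, ?_⟩
  have hcard : ((Finset.Ioo 0 M).card : ℝ) = M - 1 := by
    rw [Nat.card_Ioo, Nat.sub_zero, Nat.cast_pred (by omega)]
  have hsum : ((M : ℝ) - 1) * (1 - ε) ≤ ∑ m ∈ Finset.Ioo 0 M,
      ∫ ω, (∫ s in (0:ℝ)..(min (T₁ m ω) T), x m s) ∂μ := by
    rw [← hcard, ← nsmul_eq_mul, ← Finset.sum_const]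
    exact Finset.sum_le_sum fun m hm ↦ energy_ge m (Finset.mem_Ioo.1 hm).1 (Finset.mem_Ioo.1 hm).2
  rw [zero_add, div_eq_inv_mul]
  exact mul_le_mul_of_nonneg_left hsum (by positivity)

/-- Converse for sending `log₂ M` bits over the noiseless-feedback Poisson channel
with zero dark current (genie-aided, reduced form): if for each nonzero message
`m ∈ {1, …, M-1}` the conditional error probability `exp (-∫₀ᵀ x_m)` is at most
`ε`, then each energy `ℰ_m = E[∫₀^{min(T₁⁽ᵐ⁾,T)} x_m]` is at least `1 - ε`, and
the average energy over the `M` equiprobable messages (with `ℰ₀ = 0` for the zero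
message) is at least `(M-1)(1-ε)/M`. -/
theorem converse_M_messages
    (M : ℕ) (hM : 2 ≤ M)
    {Ω : Type*} [MeasurableSpace Ω] (μ : Measure Ω) [IsProbabilityMeasure μ]
    (x : ℕ → ℝ → ℝ) (T₁ : ℕ → Ω → ℝ)
    (hx_meas : ∀ m, 1 ≤ m → m < M → Measurable (x m))
    (hx_nonneg : ∀ m, 1 ≤ m → m < M → ∀ t : ℝ, 0 ≤ t → 0 ≤ x m t)
    (hx_loc : ∀ m, 1 ≤ m → m < M → ∀ T : ℝ, 0 ≤ T → IntegrableOn (x m) (Set.Icc 0 T))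
    (hT₁_meas : ∀ m, 1 ≤ m → m < M → Measurable (T₁ m))
    (hT₁_nonneg : ∀ m, 1 ≤ m → m < M → ∀ ω, 0 ≤ T₁ m ω)
    (hsurv : ∀ m, 1 ≤ m → m < M → ∀ t : ℝ, 0 ≤ t →
      μ {ω | t < T₁ m ω} = ENNReal.ofReal (Real.exp (-(∫ s in (0:ℝ)..t, x m s))))
    (T : ℝ) (hT : 0 ≤ T)
    (ε : ℝ) (hε : ε ∈ Set.Icc (0:ℝ) 1)
    (herr : ∀ m, 1 ≤ m → m < M → Real.exp (-(∫ s in (0:ℝ)..T, x m s)) ≤ ε) :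
    (∀ m, 1 ≤ m → m < M →
      1 - ε ≤ ∫ ω, (∫ s in (0:ℝ)..(min (T₁ m ω) T), x m s) ∂μ)
    ∧ ((M : ℝ) - 1) * (1 - ε) / M ≤
        ((M : ℝ))⁻¹ * (0 + ∑ m ∈ Finset.Ioo 0 M,
          ∫ ω, (∫ s in (0:ℝ)..(min (T₁ m ω) T), x m s) ∂μ) :=
  converse_M_messages_general M hM μ x T₁ hx_nonneg hx_loc hT₁_meas hT₁_nonneg hsurv T hT ε herr
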